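/- For every integer n ≥ 1: if n is even then r_{2n} = 4·r_n·(r_n + 1), and if n is odd then r_{2n} − 1 = 4·r_n·(r_n + 1). In particular, 4 divides r_{2n} when n is even, and 4 divides r_{2n} − 1 when n is odd. -/
import Mathlib


def seqR : ℕ → ℤ
  | 0 => 0
  | 1 => 0
  | 2 => 1
  | n + 3 => 2 * seqR (n + 2) + seqR (n + 1) + 1

lemma seqR_rec (n : ℕ) : seqR (n + 3) = 2 * seqR (n + 2) + seqR (n + 1) + 1 := by
  simp [seqR]

lemma key : ∀ n : ℕ, 1 ≤ n →
    2 * seqR (2 * n) + 1 = 2 * (2 * seqR n + 1) ^ 2 - (-1 : ℤ) ^ n ∧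
    2 * seqR (2 * n + 1) + 1
      = 2 * (2 * seqR n + 1) * (2 * seqR (n + 1) + 1) - (-1 : ℤ) ^ n ∧
    (2 * seqR (n + 1) + 1) ^ 2 - 2 * (2 * seqR n + 1) * (2 * seqR (n + 1) + 1)
      - (2 * seqR n + 1) ^ 2 = -2 * (-1 : ℤ) ^ n := by
  intro n hn
  induction n with
  | zero => omega
  | succ m ih =>
    rcases Nat.eq_or_lt_of_le hn with h | h
    · -- m + 1 = 1
      have hm : m = 0 := by omega
      subst hm
      norm_num [seqR]
    · have hm : 1 ≤ m := by omega
      obtain ⟨h1, h2, h3⟩ := ih hm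
      have e1 : 2 * (m + 1) = 2 * m - 1 + 3 := by omega
      have e2 : 2 * (m + 1) + 1 = 2 * m + 3 := by omega
      have e3 : 2 * m - 1 + 2 = 2 * m + 1 := by omega
      have e4 : 2 * m - 1 + 1 = 2 * m := by omega
      have em : m + 2 = m - 1 + 3 := by omega
      have em2 : m - 1 + 2 = m + 1 := by omega
      have em3 : m - 1 + 1 = m := by omega
      have g1 : 2 * (m + 1) = 2 * m + 2 := by ring
      have g2 : 2 * (m + 1) + 1 = 2 * m + 3 := by ring
      have r1 : seqR (2 * m + 2) = 2 * seqR (2 * m + 1) + seqR (2 * m) + 1 := by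
        have := seqR_rec (2 * m - 1)
        rw [e3, e4] at this
        rwa [show 2 * m - 1 + 3 = 2 * m + 2 by omega] at this
      have r2 : seqR (2 * m + 3) = 2 * seqR (2 * m + 2) + seqR (2 * m + 1) + 1 :=
        seqR_rec (2 * m)
      have r3 : seqR (m + 2) = 2 * seqR (m + 1) + seqR m + 1 := by
        rw [em, seqR_rec, em2, em3]
      have hpow : (-1 : ℤ) ^ (m + 1) = -(-1 : ℤ) ^ m := by ring
      refine ⟨?_, ?_, ?_⟩
      · rw [g1, r1, hpow]; linear_combination 2 * h2 + h1 - 2 * h3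
      · rw [g2, r2, r1, r3, hpow]; linear_combination 5 * h2 + 2 * h1 - 4 * h3
      · rw [r3, hpow]; linear_combination -h3

theorem stmt19 (n : ℕ) (hn : 1 ≤ n) :
    (Even n → seqR (2 * n) = 4 * seqR n * (seqR n + 1) ∧ (4 : ℤ) ∣ seqR (2 * n)) ∧
    (Odd n → seqR (2 * n) - 1 = 4 * seqR n * (seqR n + 1) ∧ (4 : ℤ) ∣ (seqR (2 * n) - 1)) := by
  obtain ⟨h1, -, -⟩ := key n hn
  constructor
  · intro he
    have hp : (-1 : ℤ) ^ n = 1 := he.neg_one_pow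
    rw [hp] at h1
    have heq : seqR (2 * n) = 4 * seqR n * (seqR n + 1) := by nlinarith [h1]
    exact ⟨heq, ⟨seqR n * (seqR n + 1), by rw [heq]; ring⟩⟩
  · intro ho
    have hp : (-1 : ℤ) ^ n = -1 := ho.neg_one_pow
    rw [hp] at h1
    have heq : seqR (2 * n) - 1 = 4 * seqR n * (seqR n + 1) := by nlinarith [h1]
    exact ⟨heq, ⟨seqR n * (seqR n + 1), by rw [heq]; ring⟩⟩
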